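/- Let Q be a divisible quantale. If b : p ⟼ q and c : q ⟼ r are back diagonals with p ∨ q ≤ b and q ∨ r ≤ c, then ¬ₗ c ⋄ ¬ₗ b ≤ ¬ₗ(c • b), where ¬ₗ x = ⊥ ↙ x, c • b = b ↙ (c ↘ q) is the composite of back diagonals, and e ⋄ d = (e ↙ q') ⊗ d is the composite of diagonals (here ¬ₗ c ⋄ ¬ₗ b = (¬ₗ c ↙ ¬ₗ q) ⊗ ¬ₗ b). -/
import Mathlib


variable {Q : Type*}

/-- Left implication in a quantale: `limp r q = r ↙ q`. -/
def limp [CompleteLattice Q] [Monoid Q] (r q : Q) : Q := sSup {p : Q | p * q ≤ r}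

/-- Right implication in a quantale: `rimp p r = p ↘ r`. -/
def rimp [CompleteLattice Q] [Monoid Q] (p r : Q) : Q := sSup {q : Q | p * q ≤ r}

/-- `d` is a diagonal from `p` to `q`: `(d ↙ p) ⊗ p = d = q ⊗ (q ↘ d)`. -/
def IsDiag [CompleteLattice Q] [Monoid Q] (p q d : Q) : Prop :=
  limp d p * p = d ∧ q * rimp q d = d

/-- `b` is a back diagonal from `p` to `q`: `p ↙ (b ↘ p) = b = (q ↙ b) ↘ q`. -/
def IsBackDiag [CompleteLattice Q] [Monoid Q] (p q b : Q) : Prop :=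
  limp p (rimp b p) = b ∧ rimp (limp q b) q = b

section Aux

variable [CompleteLattice Q] [Monoid Q]

lemma limp_mul_le (hr : ∀ (q : Q) (S : Set Q), sSup S * q = ⨆ s ∈ S, s * q)
    (r y : Q) : limp r y * y ≤ r := by
  rw [limp, hr]
  exact iSup₂_le fun s hs => hs

lemma le_limp {x y r : Q} (h : x * y ≤ r) : x ≤ limp r y := le_sSup h

lemma mul_le_mul_right_q (hr : ∀ (q : Q) (S : Set Q), sSup S * q = ⨆ s ∈ S, s * q)
    {x y : Q} (h : x ≤ y) (z : Q) : x * z ≤ y * z := by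
  have hy : y = sSup {x, y} := by
    rw [sSup_pair, sup_eq_right.mpr h]
  calc x * z ≤ ⨆ s ∈ ({x, y} : Set Q), s * z := le_iSup₂_of_le x (by simp) le_rfl
    _ = sSup {x, y} * z := (hr z _).symm
    _ = y * z := by rw [← hy]

lemma mul_le_mul_left_q (hl : ∀ (p : Q) (S : Set Q), p * sSup S = ⨆ s ∈ S, p * s)
    {x y : Q} (h : x ≤ y) (z : Q) : z * x ≤ z * y := by
  have hy : y = sSup {x, y} := by
    rw [sSup_pair, sup_eq_right.mpr h]
  calc z * x ≤ ⨆ s ∈ ({x, y} : Set Q), z * s := le_iSup₂_of_le x (by simp) le_rfl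
    _ = z * sSup {x, y} := (hl z _).symm
    _ = z * y := by rw [← hy]

end Aux

theorem stmt16 [CompleteLattice Q] [Monoid Q]
    (hl : ∀ (p : Q) (S : Set Q), p * sSup S = ⨆ s ∈ S, p * s)
    (hr : ∀ (q : Q) (S : Set Q), sSup S * q = ⨆ s ∈ S, s * q)
    (hdiv : ∀ u v : Q, u ≤ v → limp u v * v = u ∧ v * rimp v u = u)
    (hint : (1 : Q) = ⊤)
    (p q r b c : Q) (hpq : p ⊔ q ≤ b) (hqr : q ⊔ r ≤ c)
    (hb : IsBackDiag p q b) (hc : IsBackDiag q r c) :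
    limp (limp ⊥ c) (limp ⊥ q) * limp ⊥ b ≤ limp ⊥ (limp b (rimp c q)) := by
  have hqc : q ≤ c := le_trans le_sup_left hqr
  set e := rimp c q with he
  set A := limp (limp ⊥ c) (limp ⊥ q) with hA
  set B := limp ⊥ b with hB
  set D := limp b e with hD
  -- c * e = q
  have hce : c * e = q := (hdiv q c hqc).2
  -- u := limp ⊥ e satisfies u ≤ c
  set u := limp ⊥ e with hu
  have hue : u * e ≤ ⊥ := limp_mul_le hr ⊥ e
  have huc : u ≤ c := by
    have h1 : u ≤ limp q e := le_limp (le_trans hue bot_le)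
    have h2 : limp q e = c := hc.1
    rw [← h2]; exact h1
  -- u ≤ limp ⊥ q * c
  have hu_le : u ≤ limp ⊥ q * c := by
    have hwc : limp u c * c = u := (hdiv u c huc).1
    have hwq : limp u c * q ≤ ⊥ := by
      calc limp u c * q = limp u c * (c * e) := by rw [hce]
        _ = (limp u c * c) * e := by rw [mul_assoc]
        _ = u * e := by rw [hwc]
        _ ≤ ⊥ := hue
    have hw : limp u c ≤ limp ⊥ q := le_limp hwq
    calc u = limp u c * c := hwc.symm
      _ ≤ limp ⊥ q * c := mul_le_mul_right_q hr hw c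
  -- m := B * D ≤ u
  have hDe : D * e ≤ b := limp_mul_le hr b e
  have hBb : B * b = ⊥ := (hdiv ⊥ b bot_le).1
  have hm : B * D ≤ u := by
    apply le_limp
    calc (B * D) * e = B * (D * e) := mul_assoc _ _ _
      _ ≤ B * b := mul_le_mul_left_q hl hDe B
      _ = ⊥ := hBb
  -- conclude
  apply le_limp
  have hAq : A * limp ⊥ q ≤ limp ⊥ c := limp_mul_le hr _ _
  have hcc : limp ⊥ c * c = ⊥ := (hdiv ⊥ c bot_le).1
  calc (A * B) * D = A * (B * D) := mul_assoc _ _ _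
    _ ≤ A * u := mul_le_mul_left_q hl hm A
    _ ≤ A * (limp ⊥ q * c) := mul_le_mul_left_q hl hu_le A
    _ = (A * limp ⊥ q) * c := (mul_assoc _ _ _).symm
    _ ≤ limp ⊥ c * c := mul_le_mul_right_q hr hAq c
    _ = ⊥ := hcc
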